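/- For every n > 2 and every r ∈ {n, n+2, n+3, ..., n²-2, n²} (i.e., r ∈ {n,...,n²} with r ∉ {n+1, n²-1}), there exist tuples of permutations α, β ∈ (S_n)^n such that the unitary U_{α,β} = Σ_{i,j=0}^{n-1} e_i e_j^* ⊗ e_{α_i(j)} e_{β_j(i)}^* has operator Schmidt rank Ω(U_{α,β}) = r. -/
import Mathlib


open Matrix Kronecker

/-- The realignment (reshuffling) of a bipartite operator. -/
def realign {n m : ℕ} (X : Matrix (Fin n × Fin m) (Fin n × Fin m) ℂ) :
    Matrix (Fin n × Fin n) (Fin m × Fin m) ℂ :=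
  Matrix.of fun p q => X (p.1, q.1) (p.2, q.2)

/-- The operator Schmidt rank of a bipartite operator, i.e. the rank
of its realignment. -/
noncomputable def osr {n m : ℕ} (X : Matrix (Fin n × Fin m) (Fin n × Fin m) ℂ) : ℕ :=
  (realign X).rank

/-- The bipartite unitary associated to two tuples of permutations:
`U_{α,β} = Σ_{i,j} e_i e_j^* ⊗ e_{α_i(j)} e_{β_j(i)}^*`. -/
def permU {n : ℕ} (α β : Fin n → Equiv.Perm (Fin n)) :
    Matrix (Fin n × Fin n) (Fin n × Fin n) ℂ :=
  Matrix.of fun p q => if p.2 = α p.1 q.1 ∧ q.2 = β q.1 p.1 then 1 else 0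

/-- `N(α,β) = |{(α_i(j), β_j(i)) : 0 ≤ i,j ≤ n-1}|`. -/
def Npairs {n : ℕ} (α β : Fin n → Equiv.Perm (Fin n)) : ℕ :=
  (Finset.image (fun ij : Fin n × Fin n => ((α ij.1) ij.2, (β ij.2) ij.1))
    Finset.univ).card

open Finset
lemma rank_funMatrix {m n : Type*} [Fintype m] [Fintype n] [DecidableEq m] [DecidableEq n]
    (f : m → n) :
    (Matrix.of fun x y => if f x = y then (1:ℂ) else 0).rank
      = (Finset.image f Finset.univ).card := by
  classical
  have hmv : (Matrix.of fun x y => if f x = y then (1:ℂ) else 0).mulVecLin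
      = LinearMap.funLeft ℂ ℂ f := by
    ext v x
    simp [Matrix.mulVecLin, Matrix.mulVec, dotProduct]
  rw [Matrix.rank, hmv]
  set E := Finset.image f Finset.univ with hE
  let g : m → ↥E := fun x => ⟨f x, Finset.mem_image_of_mem f (Finset.mem_univ x)⟩
  have hfact : f = (Subtype.val : ↥E → n) ∘ g := rfl
  have hsurj : Function.Surjective g := by
    rintro ⟨y, hy⟩
    obtain ⟨x, -, rfl⟩ := Finset.mem_image.mp hy
    exact ⟨x, rfl⟩
  rw [hfact, LinearMap.funLeft_comp]
  rw [LinearMap.range_comp_of_range_eq_top _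
    (LinearMap.range_eq_top.mpr (LinearMap.funLeft_surjective_of_injective ℂ ℂ _ Subtype.val_injective))]
  rw [LinearMap.finrank_range_of_inj (LinearMap.funLeft_injective_of_surjective ℂ ℂ _ hsurj)]
  simp [Module.finrank_pi]

lemma osr_permU {n : ℕ} (α β : Fin n → Equiv.Perm (Fin n)) :
    osr (permU α β) = Npairs α β := by
  classical
  have : realign (permU α β)
      = Matrix.of fun x y => if (fun ij : Fin n × Fin n => ((α ij.1) ij.2, (β ij.2) ij.1)) x = y
          then (1:ℂ) else 0 := by
    ext ⟨i, j⟩ ⟨k, l⟩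
    simp only [realign, permU, Matrix.of_apply]
    congr 1
    simp [Prod.ext_iff, eq_comm, and_comm]
  rw [osr, this, rank_funMatrix]
  rfl

def sigmaPerm {n : ℕ} (α β : Fin n → Equiv.Perm (Fin n)) : Equiv.Perm (Fin n × Fin n) where
  toFun := fun x => ((α x.1)⁻¹ x.2, (β ((α x.1)⁻¹ x.2)) x.1)
  invFun := fun y => ((β y.1)⁻¹ y.2, (α ((β y.1)⁻¹ y.2)) y.1)
  left_inv := by
    rintro ⟨i, k⟩
    simp
  right_inv := by
    rintro ⟨j, l⟩
    simp

lemma permU_eq_permMatrix {n : ℕ} (α β : Fin n → Equiv.Perm (Fin n)) :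
    permU α β = (sigmaPerm α β).permMatrix ℂ := by
  ext ⟨i, k⟩ ⟨j, l⟩
  simp only [permU, Matrix.of_apply, Equiv.Perm.permMatrix, PEquiv.toMatrix,
    Equiv.toPEquiv_apply, Option.mem_def, Option.some.injEq]
  congr 1
  simp only [sigmaPerm, Equiv.coe_fn_mk, Prod.ext_iff]
  apply propext
  constructor
  · rintro ⟨rfl, rfl⟩; simp
  · rintro ⟨h1, h2⟩
    subst h1
    refine ⟨by simp, ?_⟩
    rw [← h2]

lemma star_permMatrix {n : Type*} [Fintype n] [DecidableEq n] (σ : Equiv.Perm n) :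
    star (σ.permMatrix ℂ) = (σ⁻¹).permMatrix ℂ := by
  ext x y
  simp only [star_apply, Equiv.Perm.permMatrix, PEquiv.toMatrix,
    Equiv.toPEquiv_apply, Option.mem_def, Option.some.injEq]
  simp only [Matrix.of_apply]
  have : (σ y = x) ↔ (σ⁻¹ x = y) := by constructor <;> (rintro rfl; simp)
  rw [show (if σ y = x then (1:ℂ) else 0) = (if σ⁻¹ x = y then 1 else 0) from by rw [if_congr this rfl rfl]]
  split <;> simp

lemma permMatrix_mem_unitaryGroup {n : Type*} [Fintype n] [DecidableEq n] (σ : Equiv.Perm n) :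
    σ.permMatrix ℂ ∈ Matrix.unitaryGroup n ℂ := by
  rw [Matrix.mem_unitaryGroup_iff, star_permMatrix]
  rw [Equiv.Perm.permMatrix, Equiv.Perm.permMatrix, ← PEquiv.toMatrix_trans,
    ← Equiv.toPEquiv_trans]
  have : σ.trans σ⁻¹ = Equiv.refl n := Equiv.self_trans_symm σ
  rw [this, Equiv.toPEquiv_refl, PEquiv.toMatrix_refl]

lemma permU_mem_unitaryGroup {n : ℕ} (α β : Fin n → Equiv.Perm (Fin n)) :
    permU α β ∈ Matrix.unitaryGroup (Fin n × Fin n) ℂ := by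
  rw [permU_eq_permMatrix]
  exact permMatrix_mem_unitaryGroup _



private lemma modAux1 {a m : ℕ} (h : a < m) : ((a + 1) % m + (m - 1)) % m = a := by
  have hm : 0 < m := by omega
  rw [Nat.mod_add_mod, show a + 1 + (m - 1) = a + m by omega, Nat.add_mod_right,
    Nat.mod_eq_of_lt h]

private lemma modAux2 {a m : ℕ} (h : a < m) : ((a + (m - 1)) % m + 1) % m = a := by
  have hm : 0 < m := by omega
  rw [Nat.mod_add_mod, show a + (m - 1) + 1 = a + m by omega, Nat.add_mod_right,
    Nat.mod_eq_of_lt h]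

/-- the forward cycle `0 ↦ 1 ↦ ⋯ ↦ m-1 ↦ 0` on the first `m` elements of `Fin n`. -/
def cyc {n : ℕ} (m : ℕ) (hm : m ≤ n) : Equiv.Perm (Fin n) where
  toFun s := if h : s.val < m then
      ⟨(s.val + 1) % m, lt_of_lt_of_le (Nat.mod_lt _ (by omega)) hm⟩ else s
  invFun s := if h : s.val < m then
      ⟨(s.val + (m - 1)) % m, lt_of_lt_of_le (Nat.mod_lt _ (by omega)) hm⟩ else s
  left_inv := by
    intro s
    dsimp only
    split_ifs with h1 h2
    · exact Fin.ext (modAux1 h1)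
    · exact absurd (Nat.mod_lt _ (by omega)) h2
    · rfl
  right_inv := by
    intro s
    dsimp only
    split_ifs with h1 h2
    · exact Fin.ext (modAux2 h1)
    · exact absurd (Nat.mod_lt _ (by omega)) h2
    · rfl

lemma cyc_diff_val_of_lt {n m : ℕ} [NeZero n] (hm : m ≤ n) {s : Fin n} (h : s.val + 1 < m) :
    (s - cyc m hm s).val = n - 1 := by
  have h1 : cyc m hm s = ⟨s.val + 1, by omega⟩ := by
    show dite _ _ _ = _
    rw [dif_pos (by omega : s.val < m)]
    exact Fin.ext (Nat.mod_eq_of_lt h)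
  rw [h1, Fin.sub_def]
  simp only []
  rw [show n - (s.val + 1) + s.val = n - 1 by omega, Nat.mod_eq_of_lt (by omega)]

lemma cyc_diff_val_of_eq {n m : ℕ} [NeZero n] (hm : m ≤ n) {s : Fin n} (h : s.val + 1 = m) :
    (s - cyc m hm s).val = m - 1 := by
  have h1 : cyc m hm s = ⟨0, Fin.pos s⟩ := by
    show dite _ _ _ = _
    rw [dif_pos (by omega : s.val < m)]
    exact Fin.ext (show (s.val + 1) % m = 0 by rw [h]; exact Nat.mod_self m)
  have h0 : (⟨0, Fin.pos s⟩ : Fin n) = 0 := rfl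
  rw [h1, h0, sub_zero]
  omega

lemma cyc_diff_val_of_ge {n m : ℕ} [NeZero n] (hm : m ≤ n) {s : Fin n} (h : m ≤ s.val) :
    (s - cyc m hm s).val = 0 := by
  have h1 : cyc m hm s = s := by
    show dite _ _ _ = _
    rw [dif_neg (by omega : ¬ s.val < m)]
  rw [h1, sub_self]
  rfl


lemma card_filter_val_lt {n k : ℕ} (hk : k ≤ n) :
    (Finset.univ.filter (fun d : Fin n => d.val < k)).card = k := by
  rw [show k = (Finset.range k).card from (Finset.card_range k).symm]
  apply Finset.card_bij (fun d _ => d.val)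
  · intro a ha
    simp only [mem_filter] at ha
    simpa using ha.2
  · intro a ha b hb hab
    exact Fin.ext hab
  · intro b hb
    simp only [Finset.mem_range] at hb
    exact ⟨⟨b, by omega⟩, by simp [hb], rfl⟩

lemma core {n : ℕ} (hn2 : 2 < n) (q p e : ℕ) (hq1 : 1 ≤ q) (hqn : q < n) (hp : p < n)
    (he : e < n) (heq : q - 1 ≤ e) (ρ : Equiv.Perm (Fin n))
    (hbad : ∀ s : Fin n, (¬ ((s - ρ s).val < q - 1 ∨ (s - ρ s).val = e)) ↔ s.val < p) :
    ∃ α β : Fin n → Equiv.Perm (Fin n), Npairs α β = q * n + p := by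
  haveI : NeZero n := ⟨by omega⟩
  classical
  set τ : Fin n → Equiv.Perm (Fin n) := fun j =>
    if j.val < q - 1 then Equiv.subRight (j : Fin n)
    else if j.val < q then Equiv.subRight (⟨e, he⟩ : Fin n) else ρ with hτ
  have hτ1 : ∀ j : Fin n, j.val < q - 1 → ∀ s, τ j s = s - j := by
    intro j hj s; rw [hτ]; simp only [if_pos hj]; rfl
  have hτ2 : ∀ j : Fin n, ¬(j.val < q - 1) → j.val < q → ∀ s,
      τ j s = s - (⟨e, he⟩ : Fin n) := by
    intro j hj hj' s; rw [hτ]; simp only [if_neg hj, if_pos hj']; rfl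
  have hτ3 : ∀ j : Fin n, ¬(j.val < q) → τ j = ρ := by
    intro j hj; rw [hτ]; simp only [if_neg (by omega : ¬ j.val < q - 1), if_neg hj]
  refine ⟨fun i => Equiv.addLeft i, fun j => (Equiv.addLeft j).trans (τ j), ?_⟩
  have hNp : Npairs (fun i => Equiv.addLeft i) (fun j => (Equiv.addLeft j).trans (τ j))
      = (Finset.image (fun x : Fin n × Fin n => (x.2, τ x.1 x.2)) Finset.univ).card := by
    rw [Npairs]
    congr 1
    apply subset_antisymm
    · rw [Finset.image_subset_iff]
      rintro ⟨i, j⟩ -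
      refine Finset.mem_image.mpr ⟨(j, i + j), Finset.mem_univ _, ?_⟩
      simp only [Equiv.trans_apply]
      rw [show Equiv.addLeft j i = j + i from rfl, show Equiv.addLeft i j = i + j from rfl,
        add_comm j i]
    · rw [Finset.image_subset_iff]
      rintro ⟨j, s⟩ -
      refine Finset.mem_image.mpr ⟨(s - j, j), Finset.mem_univ _, ?_⟩
      simp only [Equiv.trans_apply]
      rw [show Equiv.addLeft (s - j) j = (s - j) + j from rfl,
        show Equiv.addLeft j (s - j) = j + (s - j) from rfl]
      rw [sub_add_cancel, add_comm j, sub_add_cancel]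
  rw [hNp]
  set A : Finset (Fin n × Fin n) :=
    Finset.univ.filter (fun x : Fin n × Fin n => (x.1 - x.2).val < q - 1 ∨ (x.1 - x.2).val = e)
    with hA
  set B : Finset (Fin n × Fin n) := Finset.image (fun s : Fin n => (s, ρ s)) Finset.univ with hB
  set E : Finset (Fin n) := Finset.univ.filter (fun d : Fin n => d.val < q - 1 ∨ d.val = e)
    with hE
  have step1 : Finset.image (fun x : Fin n × Fin n => (x.2, τ x.1 x.2)) Finset.univ = A ∪ B := by
    apply subset_antisymm
    · rw [Finset.image_subset_iff]
      rintro ⟨j, s⟩ -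
      by_cases hj1 : j.val < q - 1
      · apply Finset.mem_union_left
        rw [hA, Finset.mem_filter]
        refine ⟨Finset.mem_univ _, ?_⟩
        rw [hτ1 j hj1 s]
        left
        rw [sub_sub_cancel]
        exact hj1
      · by_cases hj2 : j.val < q
        · apply Finset.mem_union_left
          rw [hA, Finset.mem_filter]
          refine ⟨Finset.mem_univ _, ?_⟩
          rw [hτ2 j hj1 hj2 s]
          right
          rw [sub_sub_cancel]
        · apply Finset.mem_union_right
          rw [hB, Finset.mem_image]
          exact ⟨s, Finset.mem_univ _, by rw [hτ3 j hj2]⟩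
    · intro x hx
      rcases Finset.mem_union.mp hx with hx | hx
      · obtain ⟨s, t⟩ := x
        rw [hA, Finset.mem_filter] at hx
        have hx2 := hx.2
        simp only at hx2
        rcases hx2 with hd | hd
        · refine Finset.mem_image.mpr ⟨(s - t, s), Finset.mem_univ _, ?_⟩
          simp only
          rw [hτ1 _ hd, sub_sub_cancel]
        · refine Finset.mem_image.mpr ⟨((⟨q - 1, by omega⟩ : Fin n), s), Finset.mem_univ _, ?_⟩
          simp only
          rw [hτ2 (⟨q - 1, by omega⟩ : Fin n) (by simp) (by simp; omega),
            show (⟨e, he⟩ : Fin n) = s - t from Fin.ext hd.symm, sub_sub_cancel]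
      · obtain ⟨s, -, rfl⟩ := Finset.mem_image.mp hx
        refine Finset.mem_image.mpr ⟨(⟨q, hqn⟩, s), Finset.mem_univ _, ?_⟩
        simp only
        rw [hτ3 _ (by simp)]
  have step2 : E.card = q := by
    have hEeq : E = Finset.univ.filter (fun d : Fin n => d.val < q - 1) ∪ {(⟨e, he⟩ : Fin n)} := by
      ext d
      simp only [hE, Finset.mem_filter, Finset.mem_union, Finset.mem_singleton, Fin.ext_iff,
        Finset.mem_univ, true_and]
    have hdisj : Disjoint (Finset.univ.filter (fun d : Fin n => d.val < q - 1))
        ({(⟨e, he⟩ : Fin n)} : Finset (Fin n)) := by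
      rw [Finset.disjoint_singleton_right, Finset.mem_filter]
      intro h
      exact absurd h.2 (show ¬ (e < q - 1) by omega)
    rw [hEeq, Finset.card_union_of_disjoint hdisj, card_filter_val_lt (by omega : q - 1 ≤ n),
      Finset.card_singleton]
    omega
  have step3 : A.card = n * q := by
    have hAeq : A = Finset.image (fun x : Fin n × Fin n => (x.1, x.1 - x.2))
        (Finset.univ ×ˢ E) := by
      ext ⟨s, t⟩
      constructor
      · intro hx
        rw [hA, Finset.mem_filter] at hx
        refine Finset.mem_image.mpr ⟨(s, s - t), ?_, by simp [sub_sub_cancel]⟩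
        rw [Finset.mem_product]
        exact ⟨Finset.mem_univ _, by rw [hE, Finset.mem_filter]; exact ⟨Finset.mem_univ _, hx.2⟩⟩
      · intro hx
        obtain ⟨⟨a, d⟩, had, heq2⟩ := Finset.mem_image.mp hx
        rw [Finset.mem_product, hE, Finset.mem_filter] at had
        obtain ⟨rfl, rfl⟩ : a = s ∧ a - d = t := by
          simpa [Prod.ext_iff] using heq2
        rw [hA, Finset.mem_filter]
        refine ⟨Finset.mem_univ _, ?_⟩
        show ((a : Fin n) - (a - d)).val < q - 1 ∨ ((a : Fin n) - (a - d)).val = e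
        rw [sub_sub_cancel]
        exact had.2.2
    have hinj3 : Function.Injective (fun x : Fin n × Fin n => (x.1, x.1 - x.2)) := by
      intro ⟨a, d⟩ ⟨a', d'⟩ hh
      simp only [Prod.ext_iff] at hh ⊢
      obtain ⟨rfl, h2⟩ := hh
      exact ⟨rfl, by rwa [sub_right_injective.eq_iff] at h2⟩
    rw [hAeq, Finset.card_image_of_injective _ hinj3, Finset.card_product, Finset.card_univ,
      Fintype.card_fin, step2]
  have step4 : (B \ A).card = p := by
    have hBA : B \ A = Finset.image (fun s : Fin n => (s, ρ s))
        (Finset.univ.filter (fun s : Fin n => s.val < p)) := by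
      ext ⟨s, t⟩
      constructor
      · intro hx
        obtain ⟨hxB, hxA⟩ := Finset.mem_sdiff.mp hx
        obtain ⟨s', -, heq2⟩ := Finset.mem_image.mp (hB ▸ hxB)
        obtain ⟨rfl, rfl⟩ : s' = s ∧ ρ s' = t := by simpa [Prod.ext_iff] using heq2
        refine Finset.mem_image.mpr ⟨s', Finset.mem_filter.mpr ⟨Finset.mem_univ _, ?_⟩, rfl⟩
        apply (hbad s').mp
        intro hcon
        apply hxA
        rw [hA, Finset.mem_filter]
        exact ⟨Finset.mem_univ _, hcon⟩
      · intro hx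
        obtain ⟨s', hs', heq2⟩ := Finset.mem_image.mp hx
        obtain ⟨rfl, rfl⟩ : s' = s ∧ ρ s' = t := by simpa [Prod.ext_iff] using heq2
        rw [Finset.mem_sdiff]
        refine ⟨Finset.mem_image.mpr ⟨s', Finset.mem_univ _, rfl⟩, ?_⟩
        intro hcon
        rw [hA, Finset.mem_filter] at hcon
        have h2 : ((s' : Fin n) - ρ s').val < q - 1 ∨ ((s' : Fin n) - ρ s').val = e := hcon.2
        exact absurd h2 ((hbad s').mpr (Finset.mem_filter.mp hs').2)
    have hinj4 : Function.Injective (fun s : Fin n => (s, ρ s)) := by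
      intro a b hh
      exact (Prod.ext_iff.mp hh).1
    rw [hBA, Finset.card_image_of_injective _ hinj4, card_filter_val_lt (by omega : p ≤ n)]
  rw [step1, Finset.union_comm, ← Finset.card_sdiff_add_card, step4, step3,
    Nat.mul_comm n q, Nat.add_comm]

-- need cyc stuff
section XX
variable {n : ℕ}

lemma exists_npairs (hn : 2 < n) (q p : ℕ) (hq1 : 1 ≤ q) (hqn : q < n) (hp : p < n)
    (hexc1 : ¬(q = 1 ∧ p = 1)) (hexc2 : ¬(q = n - 1 ∧ p = n - 1)) :
    ∃ α β : Fin n → Equiv.Perm (Fin n), Npairs α β = q * n + p := by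
  haveI : NeZero n := ⟨by omega⟩
  by_cases hpq : p ≤ q
  · have he1 := max_choice p (q - 1)
    have he2 := le_max_left p (q - 1)
    have he3 := le_max_right p (q - 1)
    apply core hn q p (max p (q - 1)) hq1 hqn hp (by omega) he3 (cyc (p + 1) (by omega))
    intro s
    rcases lt_trichotomy (s.val + 1) (p + 1) with h | h | h
    · rw [cyc_diff_val_of_lt _ h]
      exact iff_of_true (by omega) (by omega)
    · rw [cyc_diff_val_of_eq _ h]
      exact iff_of_false (fun hc => hc (by omega)) (by omega)
    · rw [cyc_diff_val_of_ge _ (by omega)]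
      exact iff_of_false (fun hc => hc (by omega)) (by omega)
  · apply core hn q p (q - 1) hq1 hqn hp (by omega) (le_refl _) (cyc p (by omega))
    intro s
    rcases lt_trichotomy (s.val + 1) p with h | h | h
    · rw [cyc_diff_val_of_lt _ h]
      exact iff_of_true (by omega) (by omega)
    · rw [cyc_diff_val_of_eq _ h]
      exact iff_of_true (by omega) (by omega)
    · rw [cyc_diff_val_of_ge _ (by omega)]
      exact iff_of_false (fun hc => hc (by omega)) (by omega)

end XX


/-- For `n > 2` and every `r` in `{n,...,n²}` with `r ∉ {n+1, n²-1}` there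
are tuples of permutations for which the unitary `U_{α,β}` has operator
Schmidt rank `r`. -/
theorem stmt10 (n r : ℕ) (hn : 2 < n) (h1 : n ≤ r) (h2 : r ≤ n ^ 2)
    (h3 : r ≠ n + 1) (h4 : r ≠ n ^ 2 - 1) :
    ∃ α β : Fin n → Equiv.Perm (Fin n),
      permU α β ∈ Matrix.unitaryGroup (Fin n × Fin n) ℂ ∧
      osr (permU α β) = r := by
  have hnn : n ^ 2 = n * n := pow_two n
  by_cases hr : r = n ^ 2
  · refine ⟨fun _ => 1, fun _ => 1, permU_mem_unitaryGroup _ _, ?_⟩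
    rw [osr_permU, Npairs]
    have himg : Finset.image (fun ij : Fin n × Fin n => (((1 : Equiv.Perm (Fin n))) ij.2,
        ((1 : Equiv.Perm (Fin n))) ij.1)) Finset.univ = Finset.univ := by
      apply Finset.image_univ_of_surjective
      intro x
      exact ⟨(x.2, x.1), rfl⟩
    simp only [Equiv.Perm.coe_one, id_eq] at himg ⊢
    rw [himg, Finset.card_univ, Fintype.card_prod, Fintype.card_fin, hr, hnn]
  · have hle : n ≤ n * n := Nat.le_mul_of_pos_left n (by omega)
    have hr2 : r ≤ n * n - 2 := by omega
    set q := r / n with hq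
    set p := r % n with hpdef
    have hqp : q * n + p = r := Nat.div_add_mod' r n
    have hp : p < n := Nat.mod_lt _ (by omega)
    have hq1 : 1 ≤ q := (Nat.one_le_div_iff (by omega)).mpr h1
    have hqn : q < n := by
      rw [hq]
      exact Nat.div_lt_of_lt_mul (by omega)
    obtain ⟨α, β, hN⟩ := exists_npairs hn q p hq1 hqn hp
      (by rintro ⟨hq', hp'⟩; rw [hq', hp'] at hqp; omega)
      (by
        rintro ⟨hq', hp'⟩
        rw [hq', hp'] at hqp
        have hsub : (n - 1) * n = n * n - n := by rw [Nat.sub_mul, Nat.one_mul]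
        omega)
    exact ⟨α, β, permU_mem_unitaryGroup _ _, by rw [osr_permU, hN, hqp]⟩
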